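/- arXiv:2106.10735 — 4 statements merged into one kernel-verified Lean document; each statement's English description precedes it below -/
import Mathlib

section
/- For γ ∈ [0,1), the equation (3+γ)(1-x)·log(1/(1-x)) = 2x has a unique root R_γ in the open interval (0,1). -/
/-!
The substitution `t = 1 / (1 - x)` maps `(0, 1)` onto `(1, ∞)` and turns the equation into
`(3 + γ) log t = 2 (t - 1)`. As `log` is strictly concave, the secant slope `log t / (t - 1)`
is strictly decreasing on `(1, ∞)`, so it takes the value `2 / (3 + γ)` at most once. It does
take it by the intermediate value theorem: the slope tends to `1 > 2 / (3 + γ)` as `t → 1⁺`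
and to `0` as `t → ∞`.
-/

open Real Set

lemma strictAntiOn_log_div_sub_one : StrictAntiOn (fun t => log t / (t - 1)) (Ioi 1) := by
  intro s hs t ht hst
  have hlog := strictConcaveOn_log_Ioi.secant_strict_mono (mem_Ioi.2 one_pos)
    (mem_Ioi.2 (zero_lt_one.trans hs)) (mem_Ioi.2 (zero_lt_one.trans ht))
    (ne_of_gt hs) (ne_of_gt ht) hst
  simpa only [log_one, sub_zero] using hlog

lemma eq_of_mul_log_eq {a b s t : ℝ} (ha : 0 < a) (hs : 1 < s) (ht : 1 < t)
    (hs_eq : a * log s = b * (s - 1)) (ht_eq : a * log t = b * (t - 1)) : s = t := by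
  have slope_eq : ∀ u, 1 < u → a * log u = b * (u - 1) → log u / (u - 1) = b / a := by
    intro u hu hu_eq
    rw [div_eq_div_iff (by linarith) ha.ne']
    linarith
  exact strictAntiOn_log_div_sub_one.injOn hs ht
    ((slope_eq s hs hs_eq).trans (slope_eq t ht ht_eq).symm)

lemma mul_sub_one_lt_mul_log {a b t : ℝ} (hb : 0 ≤ b) (ht : 1 < t) (hbt : b * t < a) :
    b * (t - 1) < a * log t := by
  have ht0 : 0 < t := by linarith
  have hlog : 1 - t⁻¹ ≤ log t := one_sub_inv_le_log_of_pos ht0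
  have hsub : 1 - t⁻¹ = (t - 1) / t := by field_simp
  have ha : 0 < a := by nlinarith
  calc b * (t - 1) < a * ((t - 1) / t) := by
        rw [mul_div_assoc', lt_div_iff₀ ht0]; nlinarith
    _ ≤ a * log t := by rw [← hsub]; exact mul_le_mul_of_nonneg_left hlog ha.le

lemma mul_log_sq_lt {a b s : ℝ} (ha : 0 < a) (hs : 1 < s) (habs : 2 * a ≤ b * (s + 1)) :
    a * log (s ^ 2) < b * (s ^ 2 - 1) := by
  have hlog : log s < s - 1 := log_lt_sub_one_of_pos (by linarith) hs.ne'
  rw [log_pow]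
  push_cast
  nlinarith

lemma exists_mul_log_eq {a b : ℝ} (hb : 0 < b) (hba : b < a) :
    ∃ t, 1 < t ∧ a * log t = b * (t - 1) := by
  set φ : ℝ → ℝ := fun t => a * log t - b * (t - 1)
  set t₀ := (a + b) / (2 * b)
  set s := 2 * a / b
  have ht₀ : 1 < t₀ := by rw [lt_div_iff₀ (by positivity)]; linarith
  have hs : 1 < s := by rw [lt_div_iff₀ hb]; linarith
  have hφt₀ : 0 < φ t₀ := by
    have : b * t₀ < a := by
      rw [mul_div_assoc', div_lt_iff₀ (by positivity)]; nlinarith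
    linarith [mul_sub_one_lt_mul_log hb.le ht₀ this]
  have hφt₁ : φ (s ^ 2) < 0 := by
    have : 2 * a ≤ b * (s + 1) := by
      rw [mul_add, mul_div_cancel₀ _ hb.ne']; linarith
    linarith [mul_log_sq_lt (by linarith) hs this]
  have ht₀₁ : t₀ ≤ s ^ 2 := by
    have : t₀ ≤ s := by
      rw [div_le_div_iff₀ (by positivity) hb]; nlinarith
    nlinarith
  have hcont : ContinuousOn φ (Icc t₀ (s ^ 2)) := by
    refine ContinuousOn.sub (ContinuousOn.mul continuousOn_const ?_) (by fun_prop)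
    exact continuousOn_log.mono fun u hu => ne_of_gt (by linarith [hu.1])
  obtain ⟨t, ht, hφt⟩ := intermediate_value_Icc' ht₀₁ hcont ⟨hφt₁.le, hφt₀.le⟩
  exact ⟨t, by linarith [ht.1], by linarith [show φ t = 0 from hφt]⟩

lemma existsUnique_mul_log_eq {a b : ℝ} (hb : 0 < b) (hba : b < a) :
    ∃! t, 1 < t ∧ a * log t = b * (t - 1) := by
  obtain ⟨t, ht, ht_eq⟩ := exists_mul_log_eq hb hba
  exact ⟨t, ⟨ht, ht_eq⟩, fun s ⟨hs, hs_eq⟩ =>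
    eq_of_mul_log_eq (by linarith) hs ht hs_eq ht_eq⟩

lemma mul_one_sub_mul_log_one_div_eq_iff {a b x : ℝ} (hx : x < 1) :
    a * (1 - x) * log (1 / (1 - x)) = b * x ↔ a * log (1 - x)⁻¹ = b * ((1 - x)⁻¹ - 1) := by
  have hx0 : 0 < 1 - x := by linarith
  have hrhs : b * ((1 - x)⁻¹ - 1) * (1 - x) = b * x := by field_simp; ring
  rw [one_div, ← hrhs, mul_right_comm, mul_left_inj' hx0.ne']

theorem root_R_gamma_exists_unique_general (γ : ℝ) (hγ0 : 0 ≤ γ) :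
    ∃! x : ℝ, x ∈ Set.Ioo (0 : ℝ) 1 ∧
      (3 + γ) * (1 - x) * Real.log (1 / (1 - x)) = 2 * x := by
  obtain ⟨t, ⟨ht, ht_eq⟩, ht_unique⟩ :=
    existsUnique_mul_log_eq two_pos (by linarith : (2 : ℝ) < 3 + γ)
  have hx : 1 - t⁻¹ ∈ Ioo 0 1 :=
    ⟨sub_pos.2 (inv_lt_one_of_one_lt₀ ht), sub_lt_self 1 (inv_pos.2 (by linarith))⟩
  refine ⟨1 - t⁻¹, ⟨hx, ?_⟩, fun y ⟨hy, hy_eq⟩ => ?_⟩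
  · rwa [mul_one_sub_mul_log_one_div_eq_iff hx.2, sub_sub_cancel, inv_inv]
  · rw [mul_one_sub_mul_log_one_div_eq_iff hy.2] at hy_eq
    have hy_inv : 1 < (1 - y)⁻¹ := one_lt_inv_iff₀.2 ⟨by linarith [hy.2], by linarith [hy.1]⟩
    rw [← ht_unique _ ⟨hy_inv, hy_eq⟩, inv_inv, sub_sub_cancel]

/-- The equation `(3+γ)(1-x) log(1/(1-x)) = 2x` has a unique root in `(0,1)`. -/
theorem root_R_gamma_exists_unique (γ : ℝ) (hγ0 : 0 ≤ γ) (hγ1 : γ < 1) :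
    ∃! x : ℝ, x ∈ Set.Ioo (0 : ℝ) 1 ∧
      (3 + γ) * (1 - x) * Real.log (1 / (1 - x)) = 2 * x :=
  root_R_gamma_exists_unique_general γ hγ0
end

section
/- Fix γ ∈ [0,1), and let R_γ ∈ (0,1) be the root of (3+γ)(1-x)log(1/(1-x)) = 2x. For any r ∈ (0, R_γ] and for all a ∈ [0,1], (a/r)log(1/(1-r)) + ((1-a²)/(1+γ))·(1/(1-r) - (1/r)log(1/(1-r))) ≤ (1/r)log(1/(1-r)). -/
/-! Writing `h(r) = (1 - r) log (1 / (1 - r)) = negMulLog (1 - r)`, one computes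
`P(1) - P(a) = (1 - a) ((3 + γ) h(r) - 2r + (1 - a)(r - h(r))) / (r (1 + γ) (1 - r))`.
Here `h(r) ≤ r` always, and `(3 + γ) h(r) ≥ 2r` for `r ≤ R_γ` because `h` is concave with
`h(0) = 0`, so `h(r) / r` decreases and `(3 + γ) h(R_γ) = 2 R_γ` is the defining equation. -/

open Real Set

noncomputable def P (γ r a : ℝ) : ℝ :=
  a / r * log (1 / (1 - r)) + (1 - a ^ 2) / (1 + γ) * (1 / (1 - r) - 1 / r * log (1 / (1 - r)))

lemma P_one (γ r : ℝ) : P γ r 1 = 1 / r * log (1 / (1 - r)) := by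
  simp [P]

lemma P_one_sub_P {γ r : ℝ} (a : ℝ) (hγ : 1 + γ ≠ 0) (hr0 : r ≠ 0) (hr1 : 1 - r ≠ 0) :
    P γ r 1 - P γ r a =
      (1 - a) * ((3 + γ) * negMulLog (1 - r) - 2 * r + (1 - a) * (r - negMulLog (1 - r))) /
        (r * (1 + γ) * (1 - r)) := by
  simp only [P, negMulLog, one_div, log_inv]
  field_simp
  ring

lemma div_mul_negMulLog_one_sub_le {r R : ℝ} (hr : 0 ≤ r) (hrR : r ≤ R) (hR0 : 0 < R)
    (hR1 : R ≤ 1) : r / R * negMulLog (1 - R) ≤ negMulLog (1 - r) := by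
  have hconc := concaveOn_negMulLog.2 (mem_Ici.2 zero_le_one) (mem_Ici.2 (sub_nonneg.2 hR1))
    (sub_nonneg.2 ((div_le_one hR0).2 hrR)) (div_nonneg hr hR0.le) (sub_add_cancel 1 (r / R))
  have hpoint : (1 - r / R) • (1 : ℝ) + (r / R) • (1 - R) = 1 - r := by
    simp only [smul_eq_mul]
    field_simp
    ring
  rwa [hpoint, negMulLog_one, smul_zero, zero_add, smul_eq_mul] at hconc

lemma two_mul_le_of_le_root {c r R : ℝ} (hc : 0 ≤ c) (hr : 0 ≤ r) (hrR : r ≤ R) (hR0 : 0 < R)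
    (hR1 : R ≤ 1) (hroot : c * negMulLog (1 - R) = 2 * R) :
    2 * r ≤ c * negMulLog (1 - r) :=
  calc 2 * r = c * (r / R * negMulLog (1 - R)) := by
        rw [mul_left_comm, hroot]
        field_simp
    _ ≤ c * negMulLog (1 - r) :=
        mul_le_mul_of_nonneg_left (div_mul_negMulLog_one_sub_le hr hrR hR0 hR1) hc

lemma P_le_P_one {γ r a : ℝ} (hγ : 0 < 1 + γ) (hr0 : 0 < r) (hr1 : r < 1) (ha : a ∈ Icc 0 1)
    (hbound : 2 * r ≤ (3 + γ) * negMulLog (1 - r)) : P γ r a ≤ P γ r 1 := by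
  have hle : negMulLog (1 - r) ≤ r := by
    simpa using negMulLog_le_one_sub_self (x := 1 - r) (by linarith)
  rw [← sub_nonneg, P_one_sub_P a hγ.ne' hr0.ne' (by linarith)]
  have h1a : 0 ≤ 1 - a := by linarith [ha.2]
  have hnum : 0 ≤ (3 + γ) * negMulLog (1 - r) - 2 * r + (1 - a) * (r - negMulLog (1 - r)) := by
    nlinarith [mul_nonneg h1a (sub_nonneg.2 hle)]
  have hden : 0 < r * (1 + γ) * (1 - r) := by
    have : 0 < 1 - r := by linarith
    positivity
  exact div_nonneg (mul_nonneg h1a hnum) hden.le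

theorem P_le_at_R_general (γ Rγ : ℝ) (hγ0 : 0 ≤ γ)
    (hR : Rγ ∈ Set.Ioo (0 : ℝ) 1)
    (hroot : (3 + γ) * (1 - Rγ) * Real.log (1 / (1 - Rγ)) = 2 * Rγ) :
    ∀ r ∈ Set.Ioc (0 : ℝ) Rγ, ∀ a ∈ Set.Icc (0 : ℝ) 1,
      (a / r) * Real.log (1 / (1 - r)) +
        ((1 - a ^ 2) / (1 + γ)) * (1 / (1 - r) - (1 / r) * Real.log (1 / (1 - r)))
        ≤ (1 / r) * Real.log (1 / (1 - r)) := by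
  rintro r ⟨hr0, hrR⟩ a ha
  have hroot' : (3 + γ) * negMulLog (1 - Rγ) = 2 * Rγ := by
    rw [← hroot, negMulLog, one_div, log_inv]
    ring
  have hkey := two_mul_le_of_le_root (by linarith) hr0.le hrR hR.1 hR.2.le hroot'
  have hP := P_le_P_one (by linarith) hr0 (hrR.trans_lt hR.2) ha hkey
  rwa [P_one] at hP

/-- For `r ≤ R_γ`, the function `P(a)` is bounded by `P(1) = (1/r) log(1/(1-r))`. -/
theorem P_le_at_R (γ Rγ : ℝ) (hγ0 : 0 ≤ γ) (hγ1 : γ < 1)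
    (hR : Rγ ∈ Set.Ioo (0 : ℝ) 1)
    (hroot : (3 + γ) * (1 - Rγ) * Real.log (1 / (1 - Rγ)) = 2 * Rγ) :
    ∀ r ∈ Set.Ioc (0 : ℝ) Rγ, ∀ a ∈ Set.Icc (0 : ℝ) 1,
      (a / r) * Real.log (1 / (1 - r)) +
        ((1 - a ^ 2) / (1 + γ)) * (1 / (1 - r) - (1 / r) * Real.log (1 / (1 - r)))
        ≤ (1 / r) * Real.log (1 / (1 - r)) :=
  P_le_at_R_general γ Rγ hγ0 hR hroot
end

section
/- If f is analytic on the unit disk with |f| ≤ 1 and f(z) = Σ_{n≥0} a_n z^n, then Σ_{n≥0} (1/(n+1))(Σ_{k=0}^n |a_k|) r^n ≤ (1/r) log(1/(1-r)) for all r ∈ (0, R], where R ∈ (0,1) is the positive root of 2x = 3(1-x)log(1/(1-x)) (R ≈ 0.5335). -/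
/-!
Wiener's inequality `‖a n‖ ≤ 1 - ‖a 0‖ ^ 2` for `n ≠ 0` is the Schwarz–Pick bound
`‖g' 0‖ ≤ 1 - ‖g 0‖ ^ 2` applied to the `n`-th section `g w = ∑ a (n k) w ^ k`, which is again
bounded by `1` because `g (z ^ n)` is the average of `f` over the rotations of `z` by the
`n`-th roots of unity. With `A = ‖a 0‖` it bounds the `n`-th Cesàro mean of the `‖a k‖` by
`(A + n (1 - A ^ 2)) / (n + 1)`; summing against `r ^ n` gives `A L + (1 - A ^ 2) (G - L)`, where
`L = log (1 / (1 - r)) / r = ∑ r ^ n / (n + 1)` and `G = 1 / (1 - r) = ∑ r ^ n`. This is at most `L`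
as soon as `(1 + A) (G - L) ≤ L`, and the worst case `A = 1` is `2 r ≤ 3 (1 - r) log (1 / (1 - r))`,
which holds for `r ≤ R` because `x ↦ (1 - x) log (1 / (1 - x))` is concave and vanishes at `0`.
-/

open Metric Set Finset

section ComplexAnalysis

open Complex FormalMultilinearSeries
open scoped ComplexConjugate

theorem IsPrimitiveRoot.geom_sum_pow {R : Type*} [CommRing R] [IsDomain R] {ζ : R} {n : ℕ}
    (hζ : IsPrimitiveRoot ζ n) (m : ℕ) :
    ∑ j ∈ range n, (ζ ^ m) ^ j = if n ∣ m then (n : R) else 0 := by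
  split_ifs with hm
  · simp [(hζ.pow_eq_one_iff_dvd m).2 hm]
  · have hne : ζ ^ m - 1 ≠ 0 := sub_ne_zero.2 fun h => hm ((hζ.pow_eq_one_iff_dvd m).1 h)
    have h := geom_sum_mul (ζ ^ m) n
    rw [pow_right_comm, hζ.pow_eq_one, one_pow, sub_self] at h
    exact (mul_eq_zero.1 h).resolve_right hne

theorem hasSum_coeff_mul_pow_average {f : ℂ → ℂ} {a : ℕ → ℂ} {ζ z : ℂ} {n : ℕ}
    (hs : ∀ z ∈ ball (0 : ℂ) 1, HasSum (fun m => a m * z ^ m) (f z))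
    (hζ : IsPrimitiveRoot ζ n) (hn : n ≠ 0) (hz : z ∈ ball (0 : ℂ) 1) :
    HasSum (fun k => a (n * k) * (z ^ n) ^ k) ((∑ j ∈ range n, f (ζ ^ j * z)) / n) := by
  have hrot : ∀ j, ζ ^ j * z ∈ ball (0 : ℂ) 1 := fun j => by
    simpa [norm_mul, norm_pow, hζ.norm'_eq_one hn] using hz
  have hsum : HasSum (fun m => (∑ j ∈ range n, a m * (ζ ^ j * z) ^ m) / n)
      ((∑ j ∈ range n, f (ζ ^ j * z)) / n) :=
    (hasSum_sum fun j _ => hs _ (hrot j)).div_const _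
  have hfilter : ∀ m, (∑ j ∈ range n, a m * (ζ ^ j * z) ^ m) / n
      = if n ∣ m then a m * z ^ m else 0 := fun m => by
    have hterm : ∀ j, a m * (ζ ^ j * z) ^ m = a m * z ^ m * (ζ ^ m) ^ j := fun j => by ring
    simp_rw [hterm, ← mul_sum, hζ.geom_sum_pow]
    split_ifs
    · field_simp
    · simp
  simp_rw [hfilter] at hsum
  rw [← (mul_right_injective₀ hn).hasSum_iff] at hsum
  · simpa [Function.comp_def, pow_mul] using hsum
  · exact fun m hm => if_neg fun ⟨k, hk⟩ => hm ⟨k, hk.symm⟩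

theorem hasSum_mul_zero_pow (c : ℕ → ℂ) : HasSum (fun n => c n * (0 : ℂ) ^ n) (c 0) := by
  simpa using hasSum_single (f := fun n => c n * (0 : ℂ) ^ n) 0 fun n hn => by simp [hn]

theorem hasFPowerSeriesOnBall_ofScalars_of_hasSum {c : ℕ → ℂ} {g : ℂ → ℂ}
    (hs : ∀ z ∈ ball (0 : ℂ) 1, HasSum (fun n => c n * z ^ n) (g z)) :
    HasFPowerSeriesOnBall g (ofScalars ℂ c) 0 1 where
  r_le := by
    refine ENNReal.le_of_forall_nnreal_lt fun r hr => ?_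
    have hr1 : (r : ℂ) ∈ ball (0 : ℂ) 1 := by simpa using hr
    refine le_radius_of_tendsto _ (l := 0) ?_
    simpa [ofScalars_norm] using (hs _ hr1).summable.tendsto_atTop_zero.norm
  r_pos := one_pos
  hasSum {y} hy := by
    have hy1 : y ∈ ball (0 : ℂ) 1 := by
      simpa [← ofReal_norm, enorm_eq_nnnorm] using hy
    simpa [ofScalars_apply_eq, mul_comm] using hs y hy1

noncomputable def mobiusDisk (b w : ℂ) : ℂ := (w - b) / (1 - conj b * w)

theorem normSq_one_sub_conj_mul_sub_normSq_sub (b w : ℂ) :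
    normSq (1 - conj b * w) - normSq (w - b) = (1 - normSq b) * (1 - normSq w) := by
  simp only [normSq_apply, sub_re, sub_im, mul_re, mul_im, conj_re, conj_im, one_re, one_im]
  ring

theorem one_sub_conj_mul_ne_zero {b w : ℂ} (hb : ‖b‖ < 1) (hw : ‖w‖ ≤ 1) :
    1 - conj b * w ≠ 0 := by
  rw [sub_ne_zero]
  refine fun h => (norm_one (α := ℂ)).not_lt ?_
  rw [h, norm_mul, norm_conj]
  nlinarith [mul_le_of_le_one_right (norm_nonneg b) hw]

theorem norm_mobiusDisk_le_one {b w : ℂ} (hb : ‖b‖ < 1) (hw : ‖w‖ ≤ 1) :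
    ‖mobiusDisk b w‖ ≤ 1 := by
  have hden := one_sub_conj_mul_ne_zero hb hw
  have hsq {x : ℂ} (hx : ‖x‖ ≤ 1) : 0 ≤ 1 - normSq x :=
    sub_nonneg.2 (Complex.sq_norm x ▸ pow_le_one₀ (norm_nonneg x) hx)
  rw [mobiusDisk, norm_div, div_le_one (norm_pos_iff.2 hden), ← sq_le_sq₀ (norm_nonneg _)
    (norm_nonneg _), Complex.sq_norm, Complex.sq_norm, ← sub_nonneg,
    normSq_one_sub_conj_mul_sub_normSq_sub]
  exact mul_nonneg (hsq hb.le) (hsq hw)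

theorem mobiusDisk_self (b : ℂ) : mobiusDisk b b = 0 := by
  simp [mobiusDisk]

theorem hasDerivAt_mobiusDisk {b w : ℂ} (hb : ‖b‖ < 1) (hw : ‖w‖ ≤ 1) :
    HasDerivAt (mobiusDisk b) ((1 - conj b * b) / (1 - conj b * w) ^ 2) w := by
  have hden := one_sub_conj_mul_ne_zero hb hw
  refine (((hasDerivAt_id' w).sub_const b).div
    (((hasDerivAt_id' w).const_mul (conj b)).const_sub 1) hden).congr_deriv ?_
  ring

theorem hasDerivAt_mobiusDisk_self {b : ℂ} (hb : ‖b‖ < 1) :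
    HasDerivAt (mobiusDisk b) (((1 - ‖b‖ ^ 2 : ℝ) : ℂ)⁻¹) b := by
  have hden := one_sub_conj_mul_ne_zero hb hb.le
  convert hasDerivAt_mobiusDisk hb hb.le using 1
  rw [mul_comm, mul_conj, ← Complex.sq_norm] at hden ⊢
  push_cast at hden ⊢
  field_simp

theorem norm_deriv_zero_le_one_sub_sq_of_mapsTo_ball {g : ℂ → ℂ}
    (hd : DifferentiableOn ℂ g (ball 0 1)) (hg : MapsTo g (ball 0 1) (closedBall 0 1)) :
    ‖deriv g 0‖ ≤ 1 - ‖g 0‖ ^ 2 := by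
  have h0 : (0 : ℂ) ∈ ball (0 : ℂ) 1 := mem_ball_self one_pos
  have hg1 : ∀ z ∈ ball (0 : ℂ) 1, ‖g z‖ ≤ 1 := fun z hz => by simpa using hg hz
  rcases (hg1 0 h0).lt_or_eq with hlt | heq
  · set φ := mobiusDisk (g 0) ∘ g
    have hφd : DifferentiableOn ℂ φ (ball 0 1) := fun z hz =>
      (hasDerivAt_mobiusDisk hlt (hg1 z hz)).differentiableAt.comp_differentiableWithinAt z
        (hd z hz)
    have hφ : MapsTo φ (ball 0 1) (closedBall (φ 0) 1) := fun z hz => by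
      simpa [φ, mobiusDisk_self] using norm_mobiusDisk_le_one hlt (hg1 z hz)
    have hderiv : deriv φ 0 = ((1 - ‖g 0‖ ^ 2 : ℝ) : ℂ)⁻¹ * deriv g 0 :=
      ((hasDerivAt_mobiusDisk_self hlt).comp 0
        ((hd 0 h0).differentiableAt (ball_mem_nhds 0 one_pos)).hasDerivAt).deriv
    have hschwarz := Complex.norm_deriv_le_div_of_mapsTo_ball hφd hφ one_pos
    have hpos : 0 < 1 - ‖g 0‖ ^ 2 := by nlinarith [norm_nonneg (g 0)]
    rwa [hderiv, norm_mul, norm_inv, norm_real, Real.norm_of_nonneg hpos.le, div_one,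
      inv_mul_le_iff₀ hpos, mul_one] at hschwarz
  · have hmax : IsLocalMax (norm ∘ g) 0 :=
      Filter.eventually_of_mem (ball_mem_nhds 0 one_pos) fun z hz => by simpa [heq] using hg1 z hz
    have hconst : g =ᶠ[nhds 0] fun _ => g 0 := Complex.eventually_eq_of_isLocalMax_norm
      (Filter.eventually_of_mem (ball_mem_nhds 0 one_pos) fun z hz =>
        (hd z hz).differentiableAt (isOpen_ball.mem_nhds hz)) hmax
    rw [hconst.deriv_eq, deriv_const, heq]
    norm_num

theorem norm_coeff_one_le_one_sub_sq {c : ℕ → ℂ} {g : ℂ → ℂ}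
    (hs : ∀ z ∈ ball (0 : ℂ) 1, HasSum (fun n => c n * z ^ n) (g z))
    (hb : ∀ z ∈ ball (0 : ℂ) 1, ‖g z‖ ≤ 1) : ‖c 1‖ ≤ 1 - ‖c 0‖ ^ 2 := by
  have hp := hasFPowerSeriesOnBall_ofScalars_of_hasSum hs
  have hg0 : g 0 = c 0 := (hs 0 (mem_ball_self one_pos)).unique (hasSum_mul_zero_pow c)
  have hderiv : deriv g 0 = c 1 := by
    simpa [ofScalars_apply_eq] using hp.hasFPowerSeriesAt.hasDerivAt.deriv
  have hd : DifferentiableOn ℂ g (ball 0 1) := by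
    simpa [← ENNReal.coe_one, Metric.eball_coe] using hp.differentiableOn
  simpa [hg0, hderiv] using
    norm_deriv_zero_le_one_sub_sq_of_mapsTo_ball hd fun z hz => by simpa using hb z hz

theorem norm_coeff_le_one_sub_sq {f : ℂ → ℂ} {a : ℕ → ℂ}
    (hs : ∀ z ∈ ball (0 : ℂ) 1, HasSum (fun m => a m * z ^ m) (f z))
    (hb : ∀ z ∈ ball (0 : ℂ) 1, ‖f z‖ ≤ 1) {n : ℕ} (hn : n ≠ 0) :
    ‖a n‖ ≤ 1 - ‖a 0‖ ^ 2 := by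
  have hζ := Complex.isPrimitiveRoot_exp n hn
  set ζ := Complex.exp (2 * Real.pi * I / n)
  have hsection : ∀ w ∈ ball (0 : ℂ) 1, ∃ s, HasSum (fun k => a (n * k) * w ^ k) s ∧ ‖s‖ ≤ 1 := by
    intro w hw
    obtain ⟨z, rfl⟩ := IsAlgClosed.exists_pow_nat_eq w (Nat.pos_of_ne_zero hn)
    have hz : z ∈ ball (0 : ℂ) 1 := by
      simpa [norm_pow, pow_lt_one_iff_of_nonneg (norm_nonneg z) hn] using hw
    refine ⟨_, hasSum_coeff_mul_pow_average hs hζ hn hz, ?_⟩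
    have hrot : ∀ j, ‖f (ζ ^ j * z)‖ ≤ 1 := fun j => hb _ <| by
      simpa [norm_mul, norm_pow, hζ.norm'_eq_one hn] using hz
    rw [norm_div, norm_natCast, div_le_one (by positivity)]
    calc ‖∑ j ∈ range n, f (ζ ^ j * z)‖ ≤ ∑ j ∈ range n, ‖f (ζ ^ j * z)‖ := norm_sum_le _ _
      _ ≤ n := (sum_le_card_nsmul (range n) _ 1 fun j _ => hrot j).trans_eq (by simp)
  choose! h hh using hsection
  simpa using norm_coeff_one_le_one_sub_sq (fun w hw => (hh w hw).1) fun w hw => (hh w hw).2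

end ComplexAnalysis

section RealAnalysis

open Real

theorem hasSum_pow_div_succ {r : ℝ} (hr0 : 0 < r) (hr1 : r < 1) :
    HasSum (fun n : ℕ => r ^ n / (n + 1)) (1 / r * log (1 / (1 - r))) := by
  have h := (hasSum_pow_div_log_of_abs_lt_one (abs_lt.2 ⟨by linarith, hr1⟩)).mul_left (1 / r)
  rw [one_div (1 - r), log_inv]
  refine h.congr_fun fun n => ?_
  field_simp
  ring

theorem sum_range_succ_le_of_le_one_sub_sq {b : ℕ → ℝ} (hb : ∀ k, k ≠ 0 → b k ≤ 1 - b 0 ^ 2)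
    (n : ℕ) : ∑ k ∈ range (n + 1), b k ≤ b 0 + n * (1 - b 0 ^ 2) := by
  rw [sum_range_succ', add_comm]
  gcongr
  simpa using sum_le_card_nsmul (range n) _ _ fun k _ => hb (k + 1) k.succ_ne_zero

theorem tsum_cesaro_mean_mul_pow_le {b : ℕ → ℝ} {r : ℝ} (hb : ∀ k, 0 ≤ b k) (hb0 : b 0 ≤ 1)
    (hbk : ∀ k, k ≠ 0 → b k ≤ 1 - b 0 ^ 2) (hr0 : 0 < r) (hr1 : r < 1)
    (hlog : 2 * r ≤ 3 * (1 - r) * log (1 / (1 - r))) :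
    ∑' n : ℕ, 1 / ((n : ℝ) + 1) * (∑ k ∈ range (n + 1), b k) * r ^ n
      ≤ 1 / r * log (1 / (1 - r)) := by
  set L := 1 / r * log (1 / (1 - r))
  set G := 1 / (1 - r)
  set A := b 0
  set B := 1 - A ^ 2
  have hL := hasSum_pow_div_succ hr0 hr1
  have hG : HasSum (fun n : ℕ => r ^ n) G := by
    simpa [G, one_div] using hasSum_geometric_of_lt_one hr0.le hr1
  have hLG : L ≤ G := hasSum_le (fun n => div_le_self (by positivity) (by simp)) hL hG
  have h2G : 2 * G ≤ 3 * L := by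
    have hr1' : 0 < 1 - r := sub_pos.2 hr1
    have hpos : 0 < r * (1 - r) := mul_pos hr0 hr1'
    refine le_of_mul_le_mul_right ?_ hpos
    calc 2 * G * (r * (1 - r)) = 2 * r := by simp only [G]; field_simp
      _ ≤ 3 * (1 - r) * log G := hlog
      _ = 3 * L * (r * (1 - r)) := by simp only [G, L]; field_simp
  have hmajor : HasSum (fun n : ℕ => B * r ^ n + (A - B) * (r ^ n / (n + 1)))
      (B * G + (A - B) * L) :=
    (hG.mul_left B).add (hL.mul_left (A - B))
  have hterm : ∀ n : ℕ, 1 / ((n : ℝ) + 1) * (∑ k ∈ range (n + 1), b k) * r ^ n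
      ≤ B * r ^ n + (A - B) * (r ^ n / (n + 1)) := fun n => by
    calc 1 / ((n : ℝ) + 1) * (∑ k ∈ range (n + 1), b k) * r ^ n
        ≤ 1 / ((n : ℝ) + 1) * (A + n * B) * r ^ n := by
          gcongr; exact sum_range_succ_le_of_le_one_sub_sq hbk n
      _ = B * r ^ n + (A - B) * (r ^ n / (n + 1)) := by field_simp; ring
  have hsummable : Summable fun n : ℕ => 1 / ((n : ℝ) + 1) * (∑ k ∈ range (n + 1), b k) * r ^ n :=
    hmajor.summable.of_nonneg_of_le (fun n => by
      have := sum_nonneg fun k (_ : k ∈ range (n + 1)) => hb k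
      positivity) hterm
  calc _ ≤ B * G + (A - B) * L := hasSum_le hterm hsummable.hasSum hmajor
    _ ≤ L := by
      have hA : 0 ≤ 1 - A := by linarith
      have hGL : (1 + A) * (G - L) ≤ L := by nlinarith [hb 0]
      nlinarith [mul_nonneg hA (sub_nonneg.2 hGL)]

theorem negMulLog_eq_mul_log_one_div (x : ℝ) : negMulLog x = x * log (1 / x) := by
  rw [negMulLog, one_div, log_inv]
  ring

theorem two_mul_le_three_mul_one_sub_mul_log_of_le_root {r R : ℝ} (hr0 : 0 < r) (hrR : r ≤ R)
    (hR1 : R < 1) (hroot : 2 * R = 3 * (1 - R) * log (1 / (1 - R))) :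
    2 * r ≤ 3 * (1 - r) * log (1 / (1 - r)) := by
  have hR0 : 0 < R := hr0.trans_le hrR
  set t := r / R
  have ht1 : t ≤ 1 := div_le_one_of_le₀ hrR hR0.le
  have hconc := concaveOn_negMulLog.2 (mem_Ici.2 zero_le_one) (mem_Ici.2 (sub_nonneg.2 hR1.le))
    (sub_nonneg.2 ht1) (by positivity) (sub_add_cancel 1 t)
  have hpoint : (1 - t) • (1 : ℝ) + t • (1 - R) = 1 - r := by
    simp only [smul_eq_mul, t]
    field_simp
    ring
  rw [hpoint, smul_eq_mul, smul_eq_mul, negMulLog_one, mul_zero, zero_add,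
    negMulLog_eq_mul_log_one_div, negMulLog_eq_mul_log_one_div] at hconc
  have htR : t * (2 * R) = 2 * r := by simp only [t]; field_simp
  nlinarith

end RealAnalysis

theorem cesaro_bohr_unit_disk_general (f : ℂ → ℂ) (a : ℕ → ℂ) (R : ℝ)
    (hb : ∀ z ∈ Metric.ball (0 : ℂ) 1, ‖f z‖ ≤ 1)
    (hs : ∀ z ∈ Metric.ball (0 : ℂ) 1, HasSum (fun n : ℕ => a n * z ^ n) (f z))
    (hR : R ∈ Set.Ioo (0 : ℝ) 1)
    (hroot : 2 * R = 3 * (1 - R) * Real.log (1 / (1 - R))) :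
    ∀ r ∈ Set.Ioc (0 : ℝ) R,
      (∑' n : ℕ, (1 / ((n : ℝ) + 1)) * (∑ k ∈ Finset.range (n + 1), ‖a k‖) * r ^ n)
        ≤ (1 / r) * Real.log (1 / (1 - r)) := by
  rintro r ⟨hr0, hrR⟩
  have h0 : (0 : ℂ) ∈ ball (0 : ℂ) 1 := mem_ball_self one_pos
  have ha0 : ‖a 0‖ ≤ 1 := (hs 0 h0).unique (hasSum_mul_zero_pow a) ▸ hb 0 h0
  exact tsum_cesaro_mean_mul_pow_le (fun k => norm_nonneg (a k)) ha0
    (fun k hk => norm_coeff_le_one_sub_sq hs hb hk) hr0 (hrR.trans_lt hR.2)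
    (two_mul_le_three_mul_one_sub_mul_log_of_le_root hr0 hrR hR.2 hroot)

/-- Bohr type inequality for the Cesàro operator on the unit disk (Kayumov et al.). -/
theorem cesaro_bohr_unit_disk (f : ℂ → ℂ) (a : ℕ → ℂ) (R : ℝ)
    (hf : AnalyticOn ℂ f (Metric.ball (0 : ℂ) 1))
    (hb : ∀ z ∈ Metric.ball (0 : ℂ) 1, ‖f z‖ ≤ 1)
    (hs : ∀ z ∈ Metric.ball (0 : ℂ) 1, HasSum (fun n : ℕ => a n * z ^ n) (f z))
    (hR : R ∈ Set.Ioo (0 : ℝ) 1)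
    (hroot : 2 * R = 3 * (1 - R) * Real.log (1 / (1 - R))) :
    ∀ r ∈ Set.Ioc (0 : ℝ) R,
      (∑' n : ℕ, (1 / ((n : ℝ) + 1)) * (∑ k ∈ Finset.range (n + 1), ‖a k‖) * r ^ n)
        ≤ (1 / r) * Real.log (1 / (1 - r)) :=
  cesaro_bohr_unit_disk_general f a R hb hs hR hroot
end

section
/- If f(z) = Σ_{n≥0} a_n z^n is analytic on the unit disk with |f(z)| ≤ 1, then for r ∈ (0,1), Σ_{n≥0} (1/(n+1))|Σ_{k=0}^n a_k| r^n ≤ (1/r) log(1/(1-r)). -/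
/-!
Write `s n = a 0 + ⋯ + a n`. The Taylor coefficients of `f z * (1 + z + ⋯ + z ^ (N - 1))` in
degrees `< N` are `s 0, …, s (N - 1)`, so Parseval's identity on the circle `‖z‖ = ρ` together
with `‖f‖ ≤ 1` gives `∑ n < N, ‖s n‖² ρ^(2n) ≤ ∑ n < N, ρ^(2n)`. Letting `ρ → 1` and applying
Cauchy–Schwarz yields `∑ n < N, ‖s n‖ ≤ N` for every `N`. As `r ^ n / (n + 1)` decreases in `n`,
Abel summation bounds `∑ ‖s n‖ r ^ n / (n + 1)` by `∑ r ^ n / (n + 1) = (1 / r) log (1 / (1 - r))`.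
-/

open MeasureTheory Filter Finset AddCircle Metric

section Fourier

variable {T : ℝ}

lemma fourier_natCast_apply (n : ℕ) (x : AddCircle T) :
    fourier (n : ℤ) x = fourier 1 x ^ n := by
  simp [fourier_apply, toCircle_nsmul]

lemma continuous_of_hasSum_fourier {c : ℕ → ℂ} (hc : Summable (‖c ·‖))
    {F : AddCircle T → ℂ} (hF : ∀ x, HasSum (fun n : ℕ => c n * fourier n x) (F x)) :
    Continuous F := by
  rw [show F = fun x => ∑' n : ℕ, c n * fourier n x from funext fun x => (hF x).tsum_eq.symm]
  exact continuous_tsum (fun n => by fun_prop) hc (fun n x => by simp [Circle.norm_coe])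

variable [Fact (0 < T)]

lemma hasSum_fourierCoeff_of_hasSum {c : ℕ → ℂ} (hc : Summable (‖c ·‖)) {F : AddCircle T → ℂ}
    (hF : ∀ x, HasSum (fun n : ℕ => c n * fourier n x) (F x)) (m : ℤ) :
    HasSum (fun n : ℕ => c n * Pi.single (M := fun _ => ℂ) (n : ℤ) 1 m) (fourierCoeff F m) := by
  have hint : ∀ n : ℕ, Integrable (fun x : AddCircle T => fourier (-m) x • (c n * fourier n x))
      haarAddCircle := fun n =>
    (Continuous.integrable_of_hasCompactSupport (by fun_prop) (HasCompactSupport.of_compactSpace _))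
  have hnorm : ∀ n : ℕ,
      ∫ x : AddCircle T, ‖fourier (-m) x • (c n * fourier n x)‖ ∂haarAddCircle = ‖c n‖ := by
    simp [Circle.norm_coe]
  have hterm : ∀ n : ℕ, ∫ x : AddCircle T, fourier (-m) x • (c n * fourier n x) ∂haarAddCircle
      = c n * Pi.single (M := fun _ => ℂ) (n : ℤ) 1 m := fun n => by
    rw [← fourierCoeff_fourier (T := T)]
    exact fourierCoeff.const_mul (fourier (n : ℤ)) (c n) m
  have h := hasSum_integral_of_summable_integral_norm hint (by simpa only [hnorm] using hc)
  simp only [hterm] at h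
  rwa [integral_congr_ae (.of_forall fun x => ((hF x).const_smul (fourier (-m) x)).tsum_eq)] at h

lemma fourierCoeff_natCast_of_hasSum {c : ℕ → ℂ} (hc : Summable (‖c ·‖)) {F : AddCircle T → ℂ}
    (hF : ∀ x, HasSum (fun n : ℕ => c n * fourier n x) (F x)) (k : ℕ) :
    fourierCoeff F k = c k := by
  refine (hasSum_fourierCoeff_of_hasSum hc hF k).unique ?_
  convert hasSum_ite_eq k (c k) using 2 with n
  by_cases h : n = k <;> simp [h]

lemma fourierCoeff_of_neg_of_hasSum {c : ℕ → ℂ} (hc : Summable (‖c ·‖)) {F : AddCircle T → ℂ}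
    (hF : ∀ x, HasSum (fun n : ℕ => c n * fourier n x) (F x)) {m : ℤ} (hm : m < 0) :
    fourierCoeff F m = 0 := by
  refine (hasSum_fourierCoeff_of_hasSum hc hF m).unique ?_
  convert hasSum_zero with n
  simp [show m ≠ n by omega]

theorem hasSum_norm_sq_of_hasSum_fourier {c : ℕ → ℂ} (hc : Summable (‖c ·‖))
    {F : AddCircle T → ℂ} (hF : ∀ x, HasSum (fun n : ℕ => c n * fourier n x) (F x)) :
    HasSum (fun n => ‖c n‖ ^ 2) (∫ x, ‖F x‖ ^ 2 ∂haarAddCircle) := by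
  let F' : C(AddCircle T, ℂ) := ⟨F, continuous_of_hasSum_fourier hc hF⟩
  have hP := hasSum_sq_fourierCoeff (ContinuousMap.toLp (E := ℂ) 2 haarAddCircle ℂ F')
  have hI : ∫ x, ‖ContinuousMap.toLp (E := ℂ) 2 haarAddCircle ℂ F' x‖ ^ 2 ∂haarAddCircle
      = ∫ x, ‖F x‖ ^ 2 ∂haarAddCircle := by
    refine integral_congr_ae ?_
    filter_upwards [ContinuousMap.coeFn_toLp (p := 2) (𝕜 := ℂ) haarAddCircle F'] with x hx
    rw [hx]
    rfl
  simp only [fourierCoeff_toLp] at hP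
  rw [hI, ← Nat.cast_injective.hasSum_iff] at hP
  · simpa [Function.comp_def, F', fourierCoeff_natCast_of_hasSum hc hF] using hP
  · rintro m hm
    have : m < 0 := by
      by_contra! h
      exact hm ⟨m.toNat, by omega⟩
    simp [F', fourierCoeff_of_neg_of_hasSum hc hF this]

lemma tsum_norm_sq_le_of_norm_le {c e : ℕ → ℂ} (hc : Summable (‖c ·‖)) (he : Summable (‖e ·‖))
    {F G : AddCircle T → ℂ} (hF : ∀ x, HasSum (fun n : ℕ => c n * fourier n x) (F x))
    (hG : ∀ x, HasSum (fun n : ℕ => e n * fourier n x) (G x)) (hFG : ∀ x, ‖F x‖ ≤ ‖G x‖) :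
    ∑' n, ‖c n‖ ^ 2 ≤ ∑' n, ‖e n‖ ^ 2 := by
  rw [(hasSum_norm_sq_of_hasSum_fourier hc hF).tsum_eq,
    (hasSum_norm_sq_of_hasSum_fourier he hG).tsum_eq]
  refine integral_mono_of_nonneg (.of_forall fun x => by positivity) ?_
    (.of_forall fun x => pow_le_pow_left₀ (norm_nonneg _) (hFG x) 2)
  exact ((continuous_of_hasSum_fourier he hG).norm.pow 2).integrable_of_hasCompactSupport
    (HasCompactSupport.of_compactSpace _)

end Fourier

lemma Summable.norm_sq {ι E : Type*} [SeminormedAddCommGroup E] {c : ι → E}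
    (hc : Summable (‖c ·‖)) : Summable (‖c ·‖ ^ 2) := by
  refine .of_norm_bounded_eventually hc ?_
  filter_upwards [hc.tendsto_cofinite_zero.eventually_le_const zero_lt_one] with n hn
  rw [norm_pow, norm_norm, sq]
  exact mul_le_of_le_one_left (norm_nonneg _) hn

section PowerSeries

variable {R : Type*} [NormedCommRing R]

lemma sum_antidiagonal_mul_pow (a d : ℕ → R) (z : R) (n : ℕ) :
    ∑ kl ∈ antidiagonal n, a kl.1 * z ^ kl.1 * (d kl.2 * z ^ kl.2)
      = (∑ kl ∈ antidiagonal n, a kl.1 * d kl.2) * z ^ n := by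
  rw [sum_mul]
  refine sum_congr rfl fun kl hkl => ?_
  rw [← mem_antidiagonal.1 hkl, pow_add]
  ring

lemma summable_norm_antidiagonal_mul_pow {a d : ℕ → R} {z : R}
    (ha : Summable fun n => ‖a n * z ^ n‖) (hd : Summable fun n => ‖d n * z ^ n‖) :
    Summable fun n => ‖(∑ kl ∈ antidiagonal n, a kl.1 * d kl.2) * z ^ n‖ := by
  simpa only [sum_antidiagonal_mul_pow] using
    summable_norm_sum_mul_antidiagonal_of_summable_norm ha hd

lemma hasSum_antidiagonal_mul_pow [CompleteSpace R] {a d : ℕ → R} {z : R}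
    (ha : Summable fun n => ‖a n * z ^ n‖) (hd : Summable fun n => ‖d n * z ^ n‖) :
    HasSum (fun n => (∑ kl ∈ antidiagonal n, a kl.1 * d kl.2) * z ^ n)
      ((∑' n, a n * z ^ n) * ∑' n, d n * z ^ n) := by
  rw [tsum_mul_tsum_eq_tsum_sum_antidiagonal_of_summable_norm ha hd]
  simp only [sum_antidiagonal_mul_pow]
  exact (summable_norm_antidiagonal_mul_pow ha hd).of_norm.hasSum

end PowerSeries

lemma summable_norm_mul_pow_of_summable {𝕜 : Type*} [NormedDivisionRing 𝕜] {a : ℕ → 𝕜} {w : 𝕜}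
    (h : Summable fun n => a n * w ^ n) {z : 𝕜} (hz : ‖z‖ < ‖w‖) :
    Summable fun n => ‖a n * z ^ n‖ := by
  have hw : 0 < ‖w‖ := (norm_nonneg z).trans_lt hz
  refine .of_norm_bounded_eventually_nat
    (summable_geometric_of_lt_one (by positivity) ((div_lt_one hw).2 hz)) ?_
  filter_upwards [(tendsto_norm_zero.comp h.tendsto_atTop_zero).eventually_le_const zero_lt_one]
    with n hn
  rw [norm_norm, norm_mul, norm_pow, div_pow]
  simp only [Function.comp_apply, norm_mul, norm_pow] at hn
  rw [le_div_iff₀ (by positivity)]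
  calc ‖a n‖ * ‖z‖ ^ n * ‖w‖ ^ n = ‖a n‖ * ‖w‖ ^ n * ‖z‖ ^ n := by ring
    _ ≤ ‖z‖ ^ n := mul_le_of_le_one_left (by positivity) hn

theorem tsum_norm_sq_antidiagonal_mul_pow_le {f : ℂ → ℂ} {a d : ℕ → ℂ} {ρ : ℝ} (hρ : 0 ≤ ρ)
    (ha : Summable fun n => ‖a n * (ρ : ℂ) ^ n‖) (hd : Summable fun n => ‖d n * (ρ : ℂ) ^ n‖)
    (hfa : ∀ z ∈ sphere (0 : ℂ) ρ, HasSum (fun n => a n * z ^ n) (f z))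
    (hf : ∀ z ∈ sphere (0 : ℂ) ρ, ‖f z‖ ≤ 1) :
    ∑' n, ‖(∑ kl ∈ antidiagonal n, a kl.1 * d kl.2) * (ρ : ℂ) ^ n‖ ^ 2
      ≤ ∑' n, ‖d n * (ρ : ℂ) ^ n‖ ^ 2 := by
  have : Fact ((0 : ℝ) < 1) := ⟨one_pos⟩
  set z : AddCircle (1 : ℝ) → ℂ := fun x => ρ * fourier 1 x
  have hz : ∀ x, z x ∈ sphere (0 : ℂ) ρ := fun x => by
    simp [z, Circle.norm_coe, abs_of_nonneg hρ]
  have hnorm : ∀ (c : ℕ → ℂ) x n, ‖c n * z x ^ n‖ = ‖c n * (ρ : ℂ) ^ n‖ := fun c x n => by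
    simp only [norm_mul, norm_pow, mem_sphere_zero_iff_norm.1 (hz x), Complex.norm_real,
      Real.norm_of_nonneg hρ]
  have hfourier : ∀ (c : ℕ → ℂ) x s, HasSum (fun n => c n * z x ^ n) s →
      HasSum (fun n => c n * (ρ : ℂ) ^ n * fourier n x) s := fun c x s h => by
    simpa only [z, mul_pow, fourier_natCast_apply, mul_assoc] using h
  refine tsum_norm_sq_le_of_norm_le (summable_norm_antidiagonal_mul_pow ha hd) hd
    (F := fun x => f (z x) * ∑' n, d n * z x ^ n) (G := fun x => ∑' n, d n * z x ^ n)
    (fun x => hfourier _ x _ ?_) (fun x => hfourier _ x _ ?_) (fun x => ?_)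
  · rw [← (hfa _ (hz x)).tsum_eq]
    exact hasSum_antidiagonal_mul_pow (by simpa only [hnorm] using ha)
      (by simpa only [hnorm] using hd)
  · exact (by simpa only [hnorm] using hd : Summable fun n => ‖d n * z x ^ n‖).of_norm.hasSum
  · rw [norm_mul]
    exact mul_le_of_le_one_left (norm_nonneg _) (hf _ (hz x))

theorem sum_range_sq_norm_partialSum_mul_pow_le {f : ℂ → ℂ} {a : ℕ → ℂ}
    (hb : ∀ z ∈ ball (0 : ℂ) 1, ‖f z‖ ≤ 1)
    (hs : ∀ z ∈ ball (0 : ℂ) 1, HasSum (fun n => a n * z ^ n) (f z))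
    {ρ : ℝ} (hρ0 : 0 ≤ ρ) (hρ1 : ρ < 1) (N : ℕ) :
    ∑ n ∈ range N, (‖∑ k ∈ range (n + 1), a k‖ * ρ ^ n) ^ 2 ≤ ∑ n ∈ range N, (ρ ^ n) ^ 2 := by
  set d : ℕ → ℂ := fun k => if k < N then 1 else 0
  have hsphere : sphere (0 : ℂ) ρ ⊆ ball 0 1 := sphere_subset_ball hρ1
  have hw : ‖(((1 + ρ) / 2 : ℝ) : ℂ)‖ = (1 + ρ) / 2 := by
    rw [Complex.norm_real, Real.norm_of_nonneg (by linarith)]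
  have ha : Summable fun n => ‖a n * (ρ : ℂ) ^ n‖ :=
    summable_norm_mul_pow_of_summable (hs _ (by rw [mem_ball_zero_iff, hw]; linarith)).summable
      (by rw [hw, Complex.norm_real, Real.norm_of_nonneg hρ0]; linarith)
  have hd : Summable fun n => ‖d n * (ρ : ℂ) ^ n‖ :=
    summable_of_ne_finset_zero (s := range N) fun n hn => by simp_all [d]
  have hcoeff : ∀ n < N, ∑ kl ∈ antidiagonal n, a kl.1 * d kl.2 = ∑ k ∈ range (n + 1), a k :=
    fun n hn => by
      rw [Nat.sum_antidiagonal_eq_sum_range_succ_mk]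
      exact sum_congr rfl fun k hk => by simp [d, show n - k < N by omega]
  have hnorm : ∀ (c : ℂ) (n : ℕ), ‖c * (ρ : ℂ) ^ n‖ = ‖c‖ * ρ ^ n := fun c n => by
    simp [abs_of_nonneg hρ0]
  calc ∑ n ∈ range N, (‖∑ k ∈ range (n + 1), a k‖ * ρ ^ n) ^ 2
      = ∑ n ∈ range N, ‖(∑ kl ∈ antidiagonal n, a kl.1 * d kl.2) * (ρ : ℂ) ^ n‖ ^ 2 :=
        sum_congr rfl fun n hn => by rw [hnorm, hcoeff n (mem_range.1 hn)]
    _ ≤ ∑' n, ‖(∑ kl ∈ antidiagonal n, a kl.1 * d kl.2) * (ρ : ℂ) ^ n‖ ^ 2 :=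
        (summable_norm_antidiagonal_mul_pow ha hd).norm_sq.sum_le_tsum _
          fun _ _ => by positivity
    _ ≤ ∑' n, ‖d n * (ρ : ℂ) ^ n‖ ^ 2 :=
        tsum_norm_sq_antidiagonal_mul_pow_le hρ0 ha hd (fun z hz => hs z (hsphere hz))
          (fun z hz => hb z (hsphere hz))
    _ = ∑ n ∈ range N, (ρ ^ n) ^ 2 := by
        rw [tsum_eq_sum (s := range N) fun n hn => by simp_all [d]]
        exact sum_congr rfl fun n hn => by simp [d, mem_range.1 hn, abs_of_nonneg hρ0]

theorem sum_range_norm_partialSum_le {f : ℂ → ℂ} {a : ℕ → ℂ}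
    (hb : ∀ z ∈ ball (0 : ℂ) 1, ‖f z‖ ≤ 1)
    (hs : ∀ z ∈ ball (0 : ℂ) 1, HasSum (fun n => a n * z ^ n) (f z)) (N : ℕ) :
    ∑ n ∈ range N, ‖∑ k ∈ range (n + 1), a k‖ ≤ N := by
  have hsq : ∑ n ∈ range N, ‖∑ k ∈ range (n + 1), a k‖ ^ 2 ≤ N := by
    have := le_on_closure (s := Set.Ioo 0 1)
      (fun ρ hρ => sum_range_sq_norm_partialSum_mul_pow_le hb hs hρ.1.le hρ.2 N)
      (by fun_prop) (by fun_prop) (by simp [closure_Ioo] : (1 : ℝ) ∈ closure (Set.Ioo 0 1))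
    simpa using this
  have hcs := sq_sum_le_card_mul_sum_sq (s := range N) (f := fun n => ‖∑ k ∈ range (n + 1), a k‖)
  rw [card_range] at hcs
  rw [← pow_le_pow_iff_left₀ (by positivity) (by positivity) two_ne_zero]
  nlinarith

theorem sum_range_mul_le_of_antitone {u v w : ℕ → ℝ}
    (huv : ∀ M, ∑ n ∈ range M, u n ≤ ∑ n ∈ range M, v n) (hw : Antitone w)
    (hw0 : ∀ n, 0 ≤ w n) (M : ℕ) :
    ∑ n ∈ range M, u n * w n ≤ ∑ n ∈ range M, v n * w n := by
  have hx : ∀ M, 0 ≤ ∑ n ∈ range M, (v n - u n) := fun M => by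
    rw [sum_sub_distrib]
    exact sub_nonneg.2 (huv M)
  have hparts := sum_range_by_parts (f := w) (g := fun n => v n - u n) M
  simp only [smul_eq_mul] at hparts
  suffices 0 ≤ ∑ n ∈ range M, w n * (v n - u n) by
    simpa [mul_sub, mul_comm] using this
  rw [hparts, sub_nonneg]
  refine (sum_nonpos fun i _ => ?_).trans (mul_nonneg (hw0 _) (hx M))
  exact mul_nonpos_of_nonpos_of_nonneg (sub_nonpos.2 (hw i.le_succ)) (hx _)

theorem Real.hasSum_pow_div_add_one {r : ℝ} (h0 : r ≠ 0) (h1 : |r| < 1) :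
    HasSum (fun n : ℕ => r ^ n / (n + 1)) (1 / r * Real.log (1 / (1 - r))) := by
  have h := (Real.hasSum_pow_div_log_of_abs_lt_one h1).mul_left r⁻¹
  have hterm : (fun n : ℕ => r ^ n / (n + 1)) = fun n : ℕ => r⁻¹ * (r ^ (n + 1) / (n + 1)) := by
    funext n
    field_simp
    ring
  rwa [hterm, one_div, one_div, Real.log_inv]

theorem cesaro_modulus_bound_general (f : ℂ → ℂ) (a : ℕ → ℂ)
    (hb : ∀ z ∈ Metric.ball (0 : ℂ) 1, ‖f z‖ ≤ 1)
    (hs : ∀ z ∈ Metric.ball (0 : ℂ) 1, HasSum (fun n : ℕ => a n * z ^ n) (f z)) :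
    ∀ r : ℝ, 0 < r → r < 1 →
      (∑' n : ℕ, (1 / ((n : ℝ) + 1)) *
          ‖∑ k ∈ Finset.range (n + 1), a k‖ * r ^ n)
        ≤ (1 / r) * Real.log (1 / (1 - r)) := by
  intro r hr0 hr1
  have hw := Real.hasSum_pow_div_add_one hr0.ne' (by rwa [abs_of_pos hr0])
  have hanti : Antitone fun n : ℕ => r ^ n / ((n : ℝ) + 1) := antitone_nat_of_succ_le fun n => by
    push_cast
    exact div_le_div₀ (by positivity) (pow_le_pow_of_le_one hr0.le hr1.le n.le_succ)
      (by positivity) (by linarith)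
  calc ∑' n : ℕ, 1 / ((n : ℝ) + 1) * ‖∑ k ∈ range (n + 1), a k‖ * r ^ n
      = ∑' n : ℕ, ‖∑ k ∈ range (n + 1), a k‖ * (r ^ n / (n + 1)) := by
        congr with n
        ring
    _ ≤ 1 / r * Real.log (1 / (1 - r)) := by
      refine Real.tsum_le_of_sum_range_le (fun n => by positivity) fun M => ?_
      calc ∑ n ∈ range M, ‖∑ k ∈ range (n + 1), a k‖ * (r ^ n / (n + 1))
          ≤ ∑ n ∈ range M, 1 * (r ^ n / (n + 1)) :=
            sum_range_mul_le_of_antitone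
              (fun M => by simpa using sum_range_norm_partialSum_le hb hs M) hanti
              (fun n => by positivity) M
        _ ≤ 1 / r * Real.log (1 / (1 - r)) := by
            simpa using sum_le_hasSum (range M) (fun n _ => by positivity) hw

/-- The modulus bound for the Cesàro operator sum:
`Σ_{n≥0} (1/(n+1)) |Σ_{k=0}^n a_k| r^n ≤ (1/r) log(1/(1-r))` for `f ∈ B(𝔻)`. -/
theorem cesaro_modulus_bound (f : ℂ → ℂ) (a : ℕ → ℂ)
    (hf : AnalyticOn ℂ f (Metric.ball (0 : ℂ) 1))
    (hb : ∀ z ∈ Metric.ball (0 : ℂ) 1, ‖f z‖ ≤ 1)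
    (hs : ∀ z ∈ Metric.ball (0 : ℂ) 1, HasSum (fun n : ℕ => a n * z ^ n) (f z)) :
    ∀ r : ℝ, 0 < r → r < 1 →
      (∑' n : ℕ, (1 / ((n : ℝ) + 1)) *
          ‖∑ k ∈ Finset.range (n + 1), a k‖ * r ^ n)
        ≤ (1 / r) * Real.log (1 / (1 - r)) :=
  cesaro_modulus_bound_general f a hb hs
end
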